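/- The catabolism insertion algorithm terminates: starting from (z, ∅) where z is the cocharge labeling of a standard word of length n and repeatedly applying f, the word component becomes empty after at most n + n(n-1)/2 steps. -/

import Mathlib

/-- `w` is a standard word of length `n`: a permutation of `1, …, n`. -/
def IsStandardWord (n : ℕ) (w : List ℕ) : Prop :=
  w.Perm ((List.range n).map (· + 1))

/-- The cocharge label of the entry `i` of the standard word `w`:
the entry `1` is labeled `0`, and the entry `i+1` gets the label of `i`,
incremented by `1` exactly when `i+1` appears to the left of `i` in `w`. -/
def entryLabel (w : List ℕ) : ℕ → ℕ
  | 0 => 0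
  | 1 => 0
  | i + 2 => entryLabel w (i + 1) + (if w.idxOf (i + 2) < w.idxOf (i + 1) then 1 else 0)

/-- The cocharge labeling of `w`: each letter of `w` is replaced by its label. -/
def cochargeLabeling (w : List ℕ) : List ℕ := w.map (entryLabel w)

/-- The cocharge of `w`: the sum of the entries of its cocharge labeling. -/
def cocharge (w : List ℕ) : ℕ := (cochargeLabeling w).sum

/-- Swap the entries of `w` in (0-indexed) positions `j` and `j+1`. -/
def swapAdj (w : List ℕ) (j : ℕ) : List ℕ :=
  (w.set j (w.getD (j + 1) 0)).set (j + 1) (w.getD j 0)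

/-- `ν` is a partition, presented as its (0-indexed) sequence of parts:
weakly decreasing with finitely many nonzero parts. -/
def IsPartitionFn (ν : ℕ → ℕ) : Prop :=
  (∀ i, ν (i + 1) ≤ ν i) ∧ ∃ N, ∀ i, N ≤ i → ν i = 0

/-- `incr ν a` is `ν + ε_{a+1}`: increment the part of (1-indexed) index `a+1`,
i.e. the part with 0-indexed index `a`. -/
def incr (ν : ℕ → ℕ) (a : ℕ) : ℕ → ℕ := fun i => if i = a then ν a + 1 else ν i

open Classical in
/-- One step of the catabolism insertion algorithm: present the last letter `a`
of the word to the partition; insert it if `ν + ε_{a+1}` is a partition,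
and otherwise corotate, prepending `a + 1` to the word. -/
noncomputable def step (s : List ℕ × (ℕ → ℕ)) : List ℕ × (ℕ → ℕ) :=
  match s.1.getLast? with
  | none => s
  | some a =>
      if IsPartitionFn (incr s.2 a) then (s.1.dropLast, incr s.2 a)
      else ((a + 1) :: s.1.dropLast, s.2)

/-- The catabolism insertion algorithm, run on the standard word `w` starting
from `(cochargeLabeling w, ∅)`, terminates with empty word and partition `ν`;
i.e. `F w = ν`. -/
def Outputs (w : List ℕ) (ν : ℕ → ℕ) : Prop :=
  ∃ k : ℕ, step^[k] (cochargeLabeling w, fun _ => 0) = ([], ν)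

/-!
Along the run the state `(x, ν)` satisfies: `ν` is a partition with `ℓ` nonzero parts, and
every letter `c > ℓ` of `x` occurs to the left of some letter `c - 1`. This holds for a
cocharge labeling with `ℓ = 0` and survives both moves. It implies that a letter `a > ℓ` is
never inserted while `a = ℓ` always is, and that the letters above `ℓ` fill an interval
`ℓ + 1, …, m`, whence `∑ x ≤ |x| ℓ + C(|x| + 1, 2)`.

Since `|ν| + |x|` is constant, an insertion keeps `n(ν) + ∑ x` and lowers
`|x| + C(|ν| + |x|, 2)` by one, while a corotation raises `n(ν) + ∑ x` by one. By the bound on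
`∑ x` the first quantity never exceeds the second, so their difference drops by exactly one per
step, from at most `n + C(n, 2)`.
-/

namespace List

theorem pair_sublist_of_idxOf_lt {α : Type*} [BEq α] [LawfulBEq α] {l : List α} {a b : α}
    (hb : b ∈ l) (h : l.idxOf a < l.idxOf b) : [a, b] <+ l := by
  have hbl := idxOf_lt_length_of_mem hb
  rw [← take_append_drop (l.idxOf a + 1) l]
  refine (singleton_sublist.2 ?_).append (singleton_sublist.2 ?_)
  · exact mem_take_iff_getElem.2 ⟨l.idxOf a, by omega, getElem_idxOf (by omega)⟩
  · refine mem_drop_iff_getElem.2 ⟨l.idxOf b - (l.idxOf a + 1), by omega, ?_⟩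
    simp only [show l.idxOf a + 1 + (l.idxOf b - (l.idxOf a + 1)) = l.idxOf b by omega,
      getElem_idxOf hbl]

theorem le_add_length_of_forall_pred_mem {x : List ℕ} {ℓ c : ℕ}
    (hx : ∀ b ∈ x, ℓ < b → b - 1 ∈ x) (hc : c ∈ x) : c ≤ ℓ + x.length := by
  have hdown : ∀ j, ℓ < c - j → c - j ∈ x := by
    intro j
    induction j with
    | zero => exact fun _ => hc
    | succ j ih =>
      intro h
      simpa [Nat.sub_sub] using hx _ (ih (by omega)) (by omega)
  have hsub : Finset.Ioc ℓ c ⊆ x.toFinset := fun b hb => by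
    rw [Finset.mem_Ioc] at hb
    simpa [Nat.sub_sub_self hb.2] using hdown (c - b) (by omega)
  have := (Finset.card_le_card hsub).trans x.toFinset_card_le
  rw [Nat.card_Ioc] at this
  omega

/-- Remove a largest letter `m`: all of `ℓ + 1, …, m` occur, so `m ≤ ℓ + length`. -/
theorem sum_le_of_forall_pred_mem {ℓ : ℕ} {x : List ℕ} (hx : ∀ b ∈ x, ℓ < b → b - 1 ∈ x) :
    x.sum ≤ x.length * ℓ + (x.length + 1).choose 2 := by
  induction hlen : x.length generalizing x with
  | zero => simp_all
  | succ n ih =>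
    obtain ⟨m, hm, hmax⟩ := x.toFinset.exists_max_image id
      (by simpa [← length_pos_iff] using hlen ▸ n.succ_pos)
    rw [mem_toFinset] at hm
    have hx' : ∀ b ∈ x.erase m, ℓ < b → b - 1 ∈ x.erase m := fun b hb hℓb =>
      have hbm : b ≤ m := hmax b (mem_toFinset.2 (mem_of_mem_erase hb))
      (mem_erase_of_ne (by omega)).2 (hx b (mem_of_mem_erase hb) hℓb)
    have hsum := ih hx' (by rw [length_erase_of_mem hm, hlen]; rfl)
    have hm_le := le_add_length_of_forall_pred_mem hx hm
    rw [hlen] at hm_le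
    rw [← sum_erase hm, Nat.choose_succ_succ' (n + 1), Nat.choose_one_right]
    linarith

theorem sublist_of_pair_sublist_append {α : Type*} {y : List α} {a c d : α}
    (h : [c, d] <+ y ++ [a]) (hd : d ≠ a) : [c, d] <+ y := by
  obtain ⟨l₁, l₂, hl, h₁, h₂⟩ := sublist_append_iff.1 h
  rcases sublist_singleton.1 h₂ with rfl | rfl
  · simpa [hl] using h₁
  · obtain ⟨rfl, rfl⟩ : l₁ = [c] ∧ d = a := by
      rcases l₁ with _ | ⟨x, _ | ⟨z, t⟩⟩ <;> simp_all
    exact absurd rfl hd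

theorem mem_of_pair_sublist_append {α : Type*} {y : List α} {a c d : α}
    (h : [c, d] <+ y ++ [a]) : c ∈ y := by
  obtain ⟨l₁, l₂, hl, h₁, h₂⟩ := sublist_append_iff.1 h
  rcases sublist_singleton.1 h₂ with rfl | rfl
  · simp only [append_nil] at hl
    exact h₁.subset (by simp [← hl])
  · obtain rfl : l₁ = [c] := by
      rcases l₁ with _ | ⟨x, _ | ⟨z, t⟩⟩ <;> simp_all
    simpa using h₁

end List

theorem Nat.add_choose_two (m k : ℕ) : (m + k).choose 2 = m.choose 2 + m * k + k.choose 2 := by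
  induction k with
  | zero => simp
  | succ k ih =>
    rw [← add_assoc, Nat.choose_succ_succ', ih, Nat.choose_succ_succ' k, Nat.choose_one_right,
      Nat.choose_one_right]
    ring

theorem IsStandardWord.mem_of_succ_mem {n : ℕ} {w : List ℕ} (hw : IsStandardWord n w) {i : ℕ}
    (h : i + 2 ∈ w) : i + 1 ∈ w := by
  simp only [hw.mem_iff, List.mem_map, List.mem_range] at h ⊢
  obtain ⟨m, hm, hmi⟩ := h
  exact ⟨i, by omega, rfl⟩

namespace Catabolism

open scoped List

theorem incr_apply (ν : ℕ → ℕ) (a i : ℕ) : incr ν a i = ν i + if i = a then 1 else 0 := by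
  unfold incr
  split_ifs with h <;> simp [h]

theorem sum_range_mul_incr (g ν : ℕ → ℕ) {a m : ℕ} (ha : a < m) :
    ∑ i ∈ Finset.range m, g i * incr ν a i = ∑ i ∈ Finset.range m, g i * ν i + g a := by
  simp only [incr_apply, mul_add, mul_ite, mul_one, mul_zero, Finset.sum_add_distrib,
    Finset.sum_ite_eq', Finset.mem_range, ha, if_true]

theorem sum_range_mul_of_le (g : ℕ → ℕ) {ν : ℕ → ℕ} {ℓ m : ℕ} (hν : ∀ i, ℓ ≤ i → ν i = 0)
    (h : ℓ ≤ m) : ∑ i ∈ Finset.range m, g i * ν i = ∑ i ∈ Finset.range ℓ, g i * ν i :=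
  (Finset.sum_subset (Finset.range_subset_range.2 h) fun i hi hiℓ => by
    simp [hν i (by simpa using hiℓ)]).symm

theorem sum_range_mul_incr_max (g : ℕ → ℕ) {ν : ℕ → ℕ} {a ℓ : ℕ}
    (hν : ∀ i, ℓ ≤ i → ν i = 0) :
    ∑ i ∈ Finset.range (max ℓ (a + 1)), g i * incr ν a i =
      ∑ i ∈ Finset.range ℓ, g i * ν i + g a := by
  rw [sum_range_mul_incr g ν (by omega), sum_range_mul_of_le g hν (le_max_left _ _)]

def size (ν : ℕ → ℕ) (ℓ : ℕ) : ℕ := ∑ i ∈ Finset.range ℓ, ν i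

/-- The statistic `n(ν) = ∑ (i - 1) ν_i`; here rows are indexed from `0`. -/
def weight (ν : ℕ → ℕ) (ℓ : ℕ) : ℕ := ∑ i ∈ Finset.range ℓ, i * ν i

theorem size_incr {ν : ℕ → ℕ} {a ℓ : ℕ} (hν : ∀ i, ℓ ≤ i → ν i = 0) :
    size (incr ν a) (max ℓ (a + 1)) = size ν ℓ + 1 := by
  simpa [size] using sum_range_mul_incr_max 1 hν

theorem weight_incr {ν : ℕ → ℕ} {a ℓ : ℕ} (hν : ∀ i, ℓ ≤ i → ν i = 0) :
    weight (incr ν a) (max ℓ (a + 1)) = weight ν ℓ + a :=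
  sum_range_mul_incr_max id hν

theorem le_size {ν : ℕ → ℕ} {ℓ : ℕ} (hν : ∀ i < ℓ, 0 < ν i) : ℓ ≤ size ν ℓ := by
  simpa [size] using
    Finset.card_nsmul_le_sum (Finset.range ℓ) ν 1 fun i hi => hν i (Finset.mem_range.1 hi)

/-- Listing the cells row by row, a cell in row `i` sits at position `≥ i`, since the rows
above it are nonempty. -/
theorem weight_le_choose_size {ν : ℕ → ℕ} {ℓ : ℕ} (hν : ∀ i < ℓ, 0 < ν i) :
    weight ν ℓ ≤ (size ν ℓ).choose 2 := by
  induction ℓ with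
  | zero => simp [weight]
  | succ ℓ ih =>
    have hℓ : ℓ ≤ size ν ℓ := le_size fun i hi => hν i (by omega)
    simp only [weight, size, Finset.sum_range_succ] at ih hℓ ⊢
    rw [Nat.add_choose_two]
    have := ih fun i hi => hν i (by omega)
    have := Nat.mul_le_mul_right (ν ℓ) hℓ
    omega

theorem step_append_of_isPartitionFn {y : List ℕ} {a : ℕ} {ν : ℕ → ℕ}
    (h : IsPartitionFn (incr ν a)) : step (y ++ [a], ν) = (y, incr ν a) := by
  simp [step, h]

theorem step_append_of_not_isPartitionFn {y : List ℕ} {a : ℕ} {ν : ℕ → ℕ}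
    (h : ¬IsPartitionFn (incr ν a)) : step (y ++ [a], ν) = ((a + 1) :: y, ν) := by
  simp [step, h]

theorem not_isPartitionFn_incr_of_lt {ν : ℕ → ℕ} {ℓ a : ℕ} (hν : ∀ i, ℓ ≤ i → ν i = 0)
    (h : ℓ < a) : ¬IsPartitionFn (incr ν a) := by
  rintro ⟨hanti, -⟩
  have := hanti (a - 1)
  rw [Nat.sub_add_cancel (by omega), incr_apply, incr_apply, hν a h.le, hν (a - 1) (by omega),
    if_pos rfl, if_neg (by omega)] at this
  omega

theorem isPartitionFn_incr_of_length {ν : ℕ → ℕ} {ℓ : ℕ} (hanti : ∀ i, ν (i + 1) ≤ ν i)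
    (hpos : ∀ i < ℓ, 0 < ν i) (hν : ∀ i, ℓ ≤ i → ν i = 0) : IsPartitionFn (incr ν ℓ) := by
  refine ⟨fun i => ?_, ℓ + 1, fun i hi => ?_⟩
  · have := hanti i
    have h₁ : i + 1 = ℓ → 0 < ν i := fun h => hpos i (by omega)
    have h₂ : ℓ ≤ i + 1 → ν (i + 1) = 0 := hν (i + 1)
    rw [incr_apply, incr_apply]
    split_ifs <;> omega
  · rw [incr_apply, if_neg (by omega), hν i (by omega)]

structure Invariant (ℓ : ℕ) (s : List ℕ × (ℕ → ℕ)) : Prop where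
  antitone : ∀ i, s.2 (i + 1) ≤ s.2 i
  pos : ∀ i < ℓ, 0 < s.2 i
  zero : ∀ i, ℓ ≤ i → s.2 i = 0
  pair_sublist : ∀ c ∈ s.1, ℓ < c → [c, c - 1] <+ s.1

/-- The subtraction is never truncated, by `Invariant.potential_le`. -/
def slack (ℓ : ℕ) (s : List ℕ × (ℕ → ℕ)) : ℕ :=
  s.1.length + (size s.2 ℓ + s.1.length).choose 2 - (weight s.2 ℓ + s.1.sum)

namespace Invariant

section

variable {ℓ : ℕ} {y : List ℕ} {a : ℕ} {ν : ℕ → ℕ}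

theorem potential_le {s : List ℕ × (ℕ → ℕ)} (h : Invariant ℓ s) :
    weight s.2 ℓ + s.1.sum ≤ s.1.length + (size s.2 ℓ + s.1.length).choose 2 := by
  have hweight := weight_le_choose_size h.pos
  have hsum := List.sum_le_of_forall_pred_mem fun c hc hℓc =>
    (h.pair_sublist c hc hℓc).subset (by simp)
  have hℓ := Nat.mul_le_mul_left s.1.length (le_size h.pos)
  rw [Nat.choose_succ_succ', Nat.choose_one_right] at hsum
  rw [Nat.add_choose_two]
  linarith

theorem insert (h : Invariant ℓ (y ++ [a], ν)) (hP : IsPartitionFn (incr ν a)) :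
    Invariant (max ℓ (a + 1)) (y, incr ν a) := by
  have haℓ : a ≤ ℓ := by
    by_contra! haℓ
    exact not_isPartitionFn_incr_of_lt h.zero haℓ hP
  refine ⟨hP.1, fun i hi => ?_, fun i hi => ?_, fun c hc hc' => ?_⟩
  · dsimp only
    by_cases hia : i = a
    · simp [incr_apply, hia]
    · rw [incr_apply, if_neg hia]
      exact h.pos i (by omega)
  · dsimp only
    rw [incr_apply, if_neg (by omega), add_zero]
    exact h.zero i (by omega)
  · exact List.sublist_of_pair_sublist_append
      (h.pair_sublist c (List.mem_append_left _ hc) (by omega)) (by omega)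

theorem slack_insert (h : Invariant ℓ (y ++ [a], ν))
    (h' : Invariant (max ℓ (a + 1)) (y, incr ν a)) :
    slack (max ℓ (a + 1)) (y, incr ν a) + 1 = slack ℓ (y ++ [a], ν) := by
  have := h'.potential_le
  simp only [slack, size_incr h.zero, weight_incr h.zero, List.length_append, List.sum_append,
    List.length_singleton, List.sum_singleton] at this ⊢
  rw [show size ν ℓ + 1 + y.length = size ν ℓ + (y.length + 1) by omega] at this ⊢
  omega

theorem corotate (h : Invariant ℓ (y ++ [a], ν)) (ha : a ≠ ℓ) :
    Invariant ℓ ((a + 1) :: y, ν) := by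
  refine ⟨h.antitone, h.pos, h.zero, fun c hc hℓc => ?_⟩
  by_cases hca : c = a + 1
  · subst hca
    have hay : a ∈ y := List.mem_of_pair_sublist_append (h.pair_sublist a (by simp) (by omega))
    simpa using hay
  · have hcy : c ∈ y := by simpa [hca] using hc
    exact (List.sublist_of_pair_sublist_append
      (h.pair_sublist c (List.mem_append_left _ hcy) hℓc) (by omega)).cons _

theorem slack_corotate (h' : Invariant ℓ ((a + 1) :: y, ν)) :
    slack ℓ ((a + 1) :: y, ν) + 1 = slack ℓ (y ++ [a], ν) := by
  have := h'.potential_le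
  simp only [slack, List.length_append, List.sum_append, List.length_cons, List.sum_cons,
    List.length_nil, List.sum_nil, zero_add, add_zero] at this ⊢
  omega

theorem exists_step {s : List ℕ × (ℕ → ℕ)} (h : Invariant ℓ s) (hs : s.1 ≠ []) :
    ∃ ℓ', Invariant ℓ' (step s) ∧ slack ℓ' (step s) + 1 = slack ℓ s := by
  obtain ⟨x, ν⟩ := s
  obtain ⟨y, a, rfl⟩ := x.eq_nil_or_concat'.resolve_left hs
  by_cases hP : IsPartitionFn (incr ν a)
  · rw [step_append_of_isPartitionFn hP]
    exact ⟨_, h.insert hP, h.slack_insert (h.insert hP)⟩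
  · have ha : a ≠ ℓ := by
      rintro rfl
      exact hP (isPartitionFn_incr_of_length h.antitone h.pos h.zero)
    rw [step_append_of_not_isPartitionFn hP]
    exact ⟨ℓ, h.corotate ha, slack_corotate (h.corotate ha)⟩

end

theorem exists_iterate_step_eq_nil {ℓ : ℕ} {s : List ℕ × (ℕ → ℕ)} (h : Invariant ℓ s) :
    ∃ k ≤ slack ℓ s, (step^[k] s).1 = [] := by
  by_cases hs : s.1 = []
  · exact ⟨0, Nat.zero_le _, hs⟩
  · obtain ⟨ℓ', h', hslack⟩ := h.exists_step hs
    obtain ⟨k, hk, hnil⟩ := h'.exists_iterate_step_eq_nil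
    exact ⟨k + 1, by omega, by rwa [Function.iterate_succ_apply]⟩
termination_by slack ℓ s
decreasing_by omega

end Invariant

theorem pair_sublist_cochargeLabeling {n : ℕ} {w : List ℕ} (hw : IsStandardWord n w) :
    ∀ {e : ℕ}, e ∈ w → 0 < entryLabel w e →
      [entryLabel w e, entryLabel w e - 1] <+ cochargeLabeling w
  | 0, _, h => absurd h (by simp [entryLabel])
  | 1, _, h => absurd h (by simp [entryLabel])
  | i + 2, he, h => by
    have hi : i + 1 ∈ w := hw.mem_of_succ_mem he
    by_cases hlt : w.idxOf (i + 2) < w.idxOf (i + 1)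
    · have hlabel : entryLabel w (i + 2) = entryLabel w (i + 1) + 1 := by simp [entryLabel, hlt]
      rw [hlabel, Nat.add_sub_cancel, ← hlabel]
      exact (List.pair_sublist_of_idxOf_lt hi hlt).map (entryLabel w)
    · have hlabel : entryLabel w (i + 2) = entryLabel w (i + 1) := by simp [entryLabel, hlt]
      rw [hlabel] at h ⊢
      exact pair_sublist_cochargeLabeling hw hi h

theorem invariant_cochargeLabeling {n : ℕ} {w : List ℕ} (hw : IsStandardWord n w) :
    Invariant 0 (cochargeLabeling w, fun _ => 0) where
  antitone _ := le_rfl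
  pos _ h := absurd h (Nat.not_lt_zero _)
  zero _ _ := rfl
  pair_sublist c hc hc0 := by
    obtain ⟨e, he, rfl⟩ := List.mem_map.1 hc
    exact pair_sublist_cochargeLabeling hw he hc0

end Catabolism

/-- The catabolism insertion algorithm terminates: starting from
`(cochargeLabeling w, ∅)` for a standard word `w` of length `n`, the word
component becomes empty after at most `n + n (n - 1) / 2` steps. -/
theorem catabolism_insertion_terminates (n : ℕ) (w : List ℕ)
    (hw : IsStandardWord n w) :
    ∃ k ≤ n + n * (n - 1) / 2,
      (step^[k] (cochargeLabeling w, fun _ => 0)).1 = [] := by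
  obtain ⟨k, hk, hnil⟩ :=
    (Catabolism.invariant_cochargeLabeling hw).exists_iterate_step_eq_nil
  refine ⟨k, hk.trans ?_, hnil⟩
  have hlen : (cochargeLabeling w).length = n := by simp [cochargeLabeling, hw.length_eq]
  calc Catabolism.slack 0 (cochargeLabeling w, fun _ => 0)
      ≤ n + n.choose 2 := by simp [Catabolism.slack, Catabolism.size, hlen]
    _ = n + n * (n - 1) / 2 := by rw [Nat.choose_two_right]
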